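/- Let A be a module over the algebra W (equivalently, a ℂ-vector space together with a ℂ-algebra homomorphism W → End_ℂ A), and let A₀ ⊆ A be a ℂ-subspace stable under the action of every operator E_{ij} (1 ≤ i,j ≤ n) and every operator E'_{ab} (1 ≤ a,b ≤ k). Let V be a nonzero gl_n-module admitting a minimal polynomial q, and V' a nonzero gl_k-module admitting a minimal polynomial q'. Suppose there is a ℂ-linear isomorphism φ : A/A₀ → V ⊗_ℂ V' such that for all i,j,a,b and all ā ∈ A/A₀: φ(E_{ij}·ā) = (E_{ij} ⊗ 1)·φ(ā) and φ(E'_{ab}·ā) = (1 ⊗ E'_{ab})·φ(ā), where on the right-hand sides E_{ij} acts on V via the gl_n-module structure and E'_{ab} acts on V' via the gl_k-module structure. Then q(u) divides u·q'(u + k − n), and q'(u) divides u·q(u − k + n). -/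

import Mathlib

noncomputable section

attribute [local instance 100] LieRing.ofAssociativeRing

/-- The polynomial ring `P = ℂ[x_{ai} : 1 ≤ a ≤ k, 1 ≤ i ≤ n]` of polynomial functions on
`k × n` matrices. -/
abbrev Pring (n k : ℕ) := MvPolynomial (Fin k × Fin n) ℂ

/-- `X_{ai}`: multiplication by the variable `x_{ai}`. -/
def Xop (n k : ℕ) (a : Fin k) (i : Fin n) : Module.End ℂ (Pring n k) :=
  LinearMap.mulLeft ℂ (MvPolynomial.X (a, i))

/-- `D_{ai}`: the partial derivative `∂/∂x_{ai}`. -/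
def Dop (n k : ℕ) (a : Fin k) (i : Fin n) : Module.End ℂ (Pring n k) :=
  (MvPolynomial.pderiv (a, i)).toLinearMap

/-- The polarization operator `E_{ij} = Σ_a X_{ai} ∘ D_{aj}` (an entry of `XᵗD`),
realizing `gl_n` on `P`. -/
def Eop (n k : ℕ) (i j : Fin n) : Module.End ℂ (Pring n k) :=
  ∑ a : Fin k, Xop n k a i * Dop n k a j

/-- The polarization operator `E'_{ab} = Σ_i X_{ai} ∘ D_{bi}` (an entry of `XDᵗ`),
realizing `gl_k` on `P`. -/
def E'op (n k : ℕ) (a b : Fin k) : Module.End ℂ (Pring n k) :=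
  ∑ i : Fin n, Xop n k a i * Dop n k b i

/-- The `n × n` matrix `E` over `End_ℂ P` with entries `E_{ij}`. -/
def EmatW (n k : ℕ) : Matrix (Fin n) (Fin n) (Module.End ℂ (Pring n k)) :=
  fun i j => Eop n k i j

/-- The `k × k` matrix `E'` over `End_ℂ P` with entries `E'_{ab}`. -/
def E'matW (n k : ℕ) : Matrix (Fin k) (Fin k) (Module.End ℂ (Pring n k)) :=
  fun a b => E'op n k a b

/-- The Weyl algebra `W ⊆ End_ℂ P`: the subalgebra generated by all `X_{ai}` and `D_{ai}`. -/
def Weyl (n k : ℕ) : Subalgebra ℂ (Module.End ℂ (Pring n k)) :=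
  Algebra.adjoin ℂ
    ((Set.range fun p : Fin k × Fin n => Xop n k p.1 p.2) ∪
     (Set.range fun p : Fin k × Fin n => Dop n k p.1 p.2))

lemma Eop_mem (n k : ℕ) (i j : Fin n) : Eop n k i j ∈ Weyl n k := by
  refine Subalgebra.sum_mem _ fun a _ => ?_
  exact mul_mem (Algebra.subset_adjoin (Or.inl ⟨(a, i), rfl⟩))
    (Algebra.subset_adjoin (Or.inr ⟨(a, j), rfl⟩))

lemma E'op_mem (n k : ℕ) (a b : Fin k) : E'op n k a b ∈ Weyl n k := by
  refine Subalgebra.sum_mem _ fun i _ => ?_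
  exact mul_mem (Algebra.subset_adjoin (Or.inl ⟨(a, i), rfl⟩))
    (Algebra.subset_adjoin (Or.inr ⟨(b, i), rfl⟩))

/-- `gl_m`: the Lie algebra of `m × m` complex matrices with the commutator bracket. -/
abbrev glN (m : ℕ) := Matrix (Fin m) (Fin m) ℂ

/-- The matrix over `End_ℂ V` whose `(i,j)` entry is the action of the matrix unit
`E_{ij}` on the `gl_m`-module `V`. -/
def FV (m : ℕ) {V : Type} [AddCommGroup V] [Module ℂ V]
    (ρ : glN m →ₗ⁅ℂ⁆ Module.End ℂ V) : Matrix (Fin m) (Fin m) (Module.End ℂ V) :=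
  fun i j => ρ (Matrix.single i j 1)

/-- `q` is the minimal polynomial of the matrix `M`: the monic polynomial of least degree
annihilating `M`. -/
def IsMinPoly {W : Type} [AddCommGroup W] [Module ℂ W] {ι : Type} [Fintype ι] [DecidableEq ι]
    (M : Matrix ι ι (Module.End ℂ W)) (q : Polynomial ℂ) : Prop :=
  q.Monic ∧ Polynomial.aeval M q = 0 ∧
    ∀ p : Polynomial ℂ, p.Monic → Polynomial.aeval M p = 0 → q.degree ≤ p.degree


/-!
In the Weyl algebra the entries of the polarization matrices `E = XᵗD` (for `gl_n`) and
`E' = XDᵗ` (for `gl_k`) commute with each other, and commuting `E'` past `X` yields, for every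
polynomial `p`, the identity
`∑_{a,b} p(E')_{ab} X_{bi} D_{aj} = (E · p(E + k - n))_{ij}`.
For `p = q'` the left side acts by zero on `A/A₀ ≅ V ⊗ V'`, because there `q'(E')` acts as
`1 ⊗ q'(E'|_{V'}) = 0`. So `u · q'(u + k - n)` annihilates the matrix `E ⊗ 1`, hence (as `V' ≠ 0`)
the matrix `E|_V`, and is divisible by its minimal polynomial `q`. Exchanging the roles of `X`
and `Xᵗ` (of `n` and `k`) gives the second divisibility.
-/

open Polynomial

lemma Matrix.aeval_apply_mem {K A ι : Type*} [CommSemiring K] [Semiring A] [Algebra K A]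
    [Fintype ι] [DecidableEq ι] {S : Subalgebra K A} {M : Matrix ι ι A} (hM : ∀ i j, M i j ∈ S)
    (p : K[X]) (i j : ι) : aeval M p i j ∈ S := by
  have hM' : M ∈ S.matrix := hM
  have h : (aeval (⟨M, hM'⟩ : S.matrix) p : Matrix ι ι A) ∈ S.matrix := SetLike.coe_mem _
  rw [coe_aeval_mk_apply] at h
  exact h i j

structure WeylFamily (R : Type*) [Ring R] (α β : Type*) [DecidableEq α] [DecidableEq β] where
  x : α → β → R
  d : α → β → R
  commute_x : ∀ a i b j, Commute (x a i) (x b j)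
  commute_d : ∀ a i b j, Commute (d a i) (d b j)
  d_mul_x : ∀ a i b j, d a i * x b j = x b j * d a i + if a = b ∧ i = j then 1 else 0

namespace WeylFamily

set_option linter.unusedSectionVars false

variable {R : Type*} [Ring R] {α β : Type*} [Fintype α] [Fintype β] [DecidableEq α]
  [DecidableEq β] (W : WeylFamily R α β)

def E : Matrix β β R := Matrix.of fun i j => ∑ a, W.x a i * W.d a j

def E' : Matrix α α R := Matrix.of fun a b => ∑ i, W.x a i * W.d b i

def swap : WeylFamily R β α where
  x i a := W.x a i
  d i a := W.d a i
  commute_x i a j b := W.commute_x a i b j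
  commute_d i a j b := W.commute_d a i b j
  d_mul_x i a j b := by simp only [W.d_mul_x, and_comm]

def shift (_ : WeylFamily R α β) : ℤ := Fintype.card α - Fintype.card β

lemma E'_mul_x (a b c : α) (i : β) :
    W.E' a b * W.x c i = W.x c i * W.E' a b + if b = c then W.x a i else 0 := by
  simp only [E', Matrix.of_apply, Finset.sum_mul, Finset.mul_sum, mul_assoc, W.d_mul_x, mul_add,
    mul_ite, mul_one, mul_zero, Finset.sum_add_distrib, ← (W.commute_x a _ c i).left_comm]
  by_cases h : b = c <;> simp [h]

lemma E'_mul_d (a b c : α) (j : β) :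
    W.E' a b * W.d c j = W.d c j * W.E' a b - if a = c then W.d b j else 0 := by
  have x_mul_d : ∀ l, W.x a l * W.d c j = W.d c j * W.x a l - if c = a ∧ j = l then 1 else 0 :=
    fun l => by rw [W.d_mul_x]; abel
  simp only [E', Matrix.of_apply, Finset.sum_mul, Finset.mul_sum, mul_assoc,
    (W.commute_d b _ c j).eq]
  simp only [← mul_assoc, x_mul_d, sub_mul, Finset.sum_sub_distrib, ite_mul, one_mul, zero_mul]
  by_cases h : a = c
  · subst h; simp
  · simp [h, Ne.symm h]

lemma commute_E_E' (i j : β) (a b : α) : Commute (W.E i j) (W.E' a b) := by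
  have key : ∀ c, W.E' a b * (W.x c i * W.d c j) = W.x c i * W.d c j * W.E' a b
      + ((if b = c then W.x a i * W.d c j else 0) - if a = c then W.x c i * W.d b j else 0) := by
    intro c
    rw [← mul_assoc, W.E'_mul_x, add_mul, mul_assoc, W.E'_mul_d, mul_sub, ite_mul, zero_mul,
      mul_ite, mul_zero, ← mul_assoc]
    abel
  symm
  simp only [Commute, SemiconjBy, E, Matrix.of_apply, Finset.mul_sum, key, Finset.sum_add_distrib,
    Finset.sum_sub_distrib, Finset.sum_ite_eq, Finset.mem_univ, if_true, sub_self, add_zero,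
    Finset.sum_mul]

/-- Both sides reduce to `∑ b l, x e l * x b i * d b l`, the commutators contributing
`|α| • x e i` on the left and `|β| • x e i` on the right. -/
lemma sum_E'_mul_x (e : α) (i : β) :
    ∑ b, W.E' e b * W.x b i = ∑ l, W.E i l * W.x e l + W.shift • W.x e i := by
  have left : ∑ b, W.E' e b * W.x b i = ∑ l, W.x e l * W.E i l + Fintype.card α • W.x e i := by
    simp only [W.E'_mul_x, if_true, Finset.sum_add_distrib, Finset.sum_const, Finset.card_univ]
    congr 1
    simp only [E, E', Matrix.of_apply, Finset.mul_sum, ← mul_assoc, (W.commute_x _ i e _).eq]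
    exact Finset.sum_comm
  have right : ∑ l, W.E i l * W.x e l = ∑ l, W.x e l * W.E i l + Fintype.card β • W.x e i := by
    have h : ∀ l, W.E i l * W.x e l = W.x e l * W.E i l + W.x e i := fun l =>
      (W.swap.E'_mul_x i l l e).trans (by rw [if_pos rfl]; rfl)
    simp only [h, Finset.sum_add_distrib, Finset.sum_const, Finset.card_univ]
  rw [left, right, shift, sub_smul, natCast_zsmul, natCast_zsmul]
  abel

def sandwich (M : Matrix α α R) : Matrix β β R :=
  Matrix.of fun i j => ∑ a, ∑ b, M a b * (W.x b i * W.d a j)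

lemma sandwich_one : W.sandwich 1 = W.E := by
  ext i j
  simp [sandwich, E, Matrix.one_apply, ite_mul]

lemma sandwich_add (M N : Matrix α α R) :
    W.sandwich (M + N) = W.sandwich M + W.sandwich N := by
  ext i j
  simp [sandwich, add_mul, Finset.sum_add_distrib]

lemma sandwich_smul {K : Type*} [CommSemiring K] [Algebra K R] (c : K) (M : Matrix α α R) :
    W.sandwich (c • M) = c • W.sandwich M := by
  ext i j
  simp [sandwich, Finset.smul_sum]

lemma sandwich_mul_E' (M : Matrix α α R) (hM : ∀ i j a b, Commute (W.E i j) (M a b)) :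
    W.sandwich (M * W.E') = (W.E + (W.shift : Matrix β β R)) * W.sandwich M := by
  ext i j
  calc W.sandwich (M * W.E') i j
      = ∑ a, ∑ e, M a e * ((∑ b, W.E' e b * W.x b i) * W.d a j) := by
        simp only [sandwich, Matrix.of_apply, Matrix.mul_apply, Finset.sum_mul, Finset.mul_sum,
          mul_assoc]
        exact Finset.sum_congr rfl fun a _ => Finset.sum_comm
    _ = ∑ l, W.E i l * W.sandwich M l j + W.shift • W.sandwich M i j := by
        simp only [sum_E'_mul_x, add_mul, Finset.sum_mul, mul_add, Finset.mul_sum,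
          Finset.sum_add_distrib, sandwich, Matrix.of_apply, smul_mul_assoc, mul_smul_comm,
          Finset.smul_sum, ← mul_assoc, (hM _ _ _ _).eq]
        congr 1
        conv_rhs => rw [Finset.sum_comm]
        exact Finset.sum_congr rfl fun _ _ => Finset.sum_comm
    _ = _ := by
        rw [add_mul, ← zsmul_one, Matrix.smul_mul, one_mul]; rfl

variable {K : Type*} [CommRing K] [Algebra K R]

lemma commute_E_aeval_E' (p : K[X]) (i j : β) (a b : α) :
    Commute (W.E i j) (aeval W.E' p a b) := by
  have hmem : ∀ a b, W.E' a b ∈ Subalgebra.centralizer K {W.E i j} := fun a b => by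
    simpa [Subalgebra.mem_centralizer_iff] using (W.commute_E_E' i j a b).eq
  exact Subalgebra.mem_centralizer_iff K |>.1 (Matrix.aeval_apply_mem hmem p a b) _ rfl

theorem sandwich_aeval (p : K[X]) :
    W.sandwich (aeval W.E' p) = aeval W.E (X * p.comp (X + C (W.shift : K))) := by
  induction p using Polynomial.induction_on with
  | C c =>
    rw [aeval_C, C_comp, map_mul, aeval_X, aeval_C, Algebra.algebraMap_eq_smul_one, sandwich_smul,
      sandwich_one, Algebra.smul_def, Algebra.commutes]
  | add p q hp hq =>
    rw [map_add, sandwich_add, hp, hq, add_comp, mul_add, map_add]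
  | monomial m c hp =>
    have hcomp : X * (C c * X ^ m * X).comp (X + C (W.shift : K))
        = (X + C (W.shift : K)) * (X * (C c * X ^ m).comp (X + C (W.shift : K))) := by
      rw [mul_comp, X_comp]; ring
    rw [pow_succ, ← mul_assoc, map_mul, aeval_X, W.sandwich_mul_E' _ (W.commute_E_aeval_E' _),
      hp, hcomp, map_mul (aeval W.E) (X + _), map_add, aeval_X, aeval_C,
      map_intCast (algebraMap K (Matrix β β R))]

end WeylFamily

namespace LinearMap

variable {K M N : Type*} [CommSemiring K] [AddCommMonoid M] [Module K M] [AddCommMonoid N]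
  [Module K N] (π : M →ₗ[K] N)

def intertwiners : Subalgebra K (Module.End K M × Module.End K N) where
  carrier := {f | ∀ x, π (f.1 x) = f.2 (π x)}
  mul_mem' {f g} hf hg x := (hf (g.1 x)).trans (congrArg f.2 (hg x))
  add_mem' hf hg x := by simp only [Prod.fst_add, Prod.snd_add, add_apply, map_add, hf x, hg x]
  algebraMap_mem' c x := by simp

variable {π}

lemma aeval_apply_mem_intertwiners {ι : Type*} [Fintype ι] [DecidableEq ι]
    {F : Matrix ι ι (Module.End K M)} {G : Matrix ι ι (Module.End K N)}
    (h : ∀ i j, (F i j, G i j) ∈ π.intertwiners) (p : K[X]) (i j : ι) :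
    (aeval F p i j, aeval G p i j) ∈ π.intertwiners := by
  let P : Matrix ι ι (Module.End K M × Module.End K N) := fun i j => (F i j, G i j)
  have hF : aeval F p = (AlgHom.fst K _ _).mapMatrix (aeval P p) := by
    rw [← aeval_algHom_apply]; rfl
  have hG : aeval G p = (AlgHom.snd K _ _).mapMatrix (aeval P p) := by
    rw [← aeval_algHom_apply]; rfl
  rw [hF, hG]
  exact Matrix.aeval_apply_mem (M := P) h p i j

end LinearMap

lemma IsMinPoly.dvd {V : Type} [AddCommGroup V] [Module ℂ V] {ι : Type} [Fintype ι]
    [DecidableEq ι] {M : Matrix ι ι (Module.End ℂ V)} {q p : ℂ[X]} (hq : IsMinPoly M q)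
    (hp : aeval M p = 0) : q ∣ p := by
  rw [minpoly.unique ℂ M hq.1 hq.2.1 hq.2.2]
  exact minpoly.dvd ℂ M hp

theorem WeylFamily.dvd_X_mul_comp_of_intertwines {R : Type*} [Ring R] [Algebra ℂ R]
    {α β : Type} [Fintype α] [Fintype β] [DecidableEq α] [DecidableEq β] (W : WeylFamily R α β)
    {A T V V' : Type} [AddCommGroup A] [Module ℂ A] [AddCommGroup T] [Module ℂ T]
    [AddCommGroup V] [Module ℂ V] [AddCommGroup V'] [Module ℂ V']
    (Φ : R →ₐ[ℂ] Module.End ℂ A) (π : A →ₗ[ℂ] T) (hπ : Function.Surjective π)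
    (ψ : Module.End ℂ V →ₐ[ℂ] Module.End ℂ T) (hψ : Function.Injective ψ)
    (ψ' : Module.End ℂ V' →ₐ[ℂ] Module.End ℂ T)
    (F : Matrix β β (Module.End ℂ V)) (F' : Matrix α α (Module.End ℂ V'))
    (hF : ∀ i j, (Φ (W.E i j), ψ (F i j)) ∈ π.intertwiners)
    (hF' : ∀ a b, (Φ (W.E' a b), ψ' (F' a b)) ∈ π.intertwiners)
    {q q' : ℂ[X]} (hq : IsMinPoly F q) (hq' : aeval F' q' = 0) :
    q ∣ X * q'.comp (X + C (W.shift : ℂ)) := by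
  have hq'E' : ∀ a b x, π (Φ (aeval W.E' q' a b) x) = 0 := fun a b x => by
    have := LinearMap.aeval_apply_mem_intertwiners (F := Φ.mapMatrix W.E')
      (G := ψ'.mapMatrix F') hF' q' a b x
    rwa [aeval_algHom_apply, aeval_algHom_apply, hq', map_zero] at this
  have hpE : ∀ i j x, π (Φ (aeval W.E (X * q'.comp (X + C (W.shift : ℂ))) i j) x) = 0 := by
    intro i j x
    rw [← W.sandwich_aeval]
    simp [WeylFamily.sandwich, map_sum, hq'E']
  refine hq.dvd (Matrix.ext fun i j => hψ (LinearMap.ext fun y => ?_))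
  obtain ⟨x, rfl⟩ := hπ y
  have := LinearMap.aeval_apply_mem_intertwiners (F := Φ.mapMatrix W.E) (G := ψ.mapMatrix F) hF
    (X * q'.comp (X + C (W.shift : ℂ))) i j x
  rw [aeval_algHom_apply, aeval_algHom_apply, AlgHom.mapMatrix_apply, AlgHom.mapMatrix_apply,
    Matrix.map_apply, Matrix.map_apply, hpE] at this
  rw [Matrix.zero_apply, map_zero, LinearMap.zero_apply]
  exact this.symm

lemma MvPolynomial.pderiv_comm {R σ : Type*} [CommSemiring R] (i j : σ) (f : MvPolynomial σ R) :
    pderiv i (pderiv j f) = pderiv j (pderiv i f) := by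
  classical
  induction f using MvPolynomial.induction_on with
  | C a => simp
  | add p q hp hq => simp [hp, hq]
  | mul_X p s ih =>
    simp only [pderiv_mul, map_add, pderiv_X, ih, Pi.single_apply]
    split_ifs <;> simp [add_right_comm]

section Weyl

variable (n k : ℕ)

lemma Xop_commute (a : Fin k) (i : Fin n) (b : Fin k) (j : Fin n) :
    Commute (Xop n k a i) (Xop n k b j) :=
  LinearMap.ext fun f => by simp only [Xop, Module.End.mul_apply, LinearMap.mulLeft_apply]; ring

lemma Dop_commute (a : Fin k) (i : Fin n) (b : Fin k) (j : Fin n) :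
    Commute (Dop n k a i) (Dop n k b j) :=
  LinearMap.ext fun f => MvPolynomial.pderiv_comm _ _ f

lemma Dop_mul_Xop (a : Fin k) (i : Fin n) (b : Fin k) (j : Fin n) :
    Dop n k a i * Xop n k b j = Xop n k b j * Dop n k a i + if a = b ∧ i = j then 1 else 0 := by
  refine LinearMap.ext fun f => ?_
  simp only [Dop, Xop, Module.End.mul_apply, LinearMap.add_apply, LinearMap.mulLeft_apply,
    Derivation.coeFn_coe, MvPolynomial.pderiv_mul, MvPolynomial.pderiv_X, Pi.single_apply]
  split_ifs <;> simp_all [add_comm, mul_comm]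

def weylFamily : WeylFamily (Weyl n k) (Fin k) (Fin n) where
  x a i := ⟨Xop n k a i, Algebra.subset_adjoin (Or.inl ⟨(a, i), rfl⟩)⟩
  d a i := ⟨Dop n k a i, Algebra.subset_adjoin (Or.inr ⟨(a, i), rfl⟩)⟩
  commute_x a i b j := Subtype.ext (Xop_commute n k a i b j)
  commute_d a i b j := Subtype.ext (Dop_commute n k a i b j)
  d_mul_x a i b j := Subtype.ext <| (Dop_mul_Xop n k a i b j).trans <| by split_ifs <;> rfl

lemma weylFamily_E (i j : Fin n) : (weylFamily n k).E i j = ⟨Eop n k i j, Eop_mem n k i j⟩ :=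
  Subtype.ext <| by simp [WeylFamily.E, weylFamily, Eop]

lemma weylFamily_E' (a b : Fin k) :
    (weylFamily n k).E' a b = ⟨E'op n k a b, E'op_mem n k a b⟩ :=
  Subtype.ext <| by simp [WeylFamily.E', weylFamily, E'op]

end Weyl

theorem stmt_11_general (n k : ℕ)
    (A : Type) [AddCommGroup A] [Module ℂ A]
    (Φ : Weyl n k →ₐ[ℂ] Module.End ℂ A)
    (A₀ : Submodule ℂ A)
    (V : Type) [AddCommGroup V] [Module ℂ V] [Nontrivial V]
    (V' : Type) [AddCommGroup V'] [Module ℂ V'] [Nontrivial V']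
    (ρ : glN n →ₗ⁅ℂ⁆ Module.End ℂ V) (ρ' : glN k →ₗ⁅ℂ⁆ Module.End ℂ V')
    (q q' : Polynomial ℂ)
    (hq : IsMinPoly (FV n ρ) q) (hq' : IsMinPoly (FV k ρ') q')
    (φ : (A ⧸ A₀) ≃ₗ[ℂ] TensorProduct ℂ V V')
    (hφE : ∀ (i j : Fin n) (x : A),
      φ (Submodule.Quotient.mk (Φ ⟨Eop n k i j, Eop_mem n k i j⟩ x)) =
        LinearMap.rTensor V' (ρ (Matrix.single i j 1))
          (φ (Submodule.Quotient.mk x)))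
    (hφE' : ∀ (a b : Fin k) (x : A),
      φ (Submodule.Quotient.mk (Φ ⟨E'op n k a b, E'op_mem n k a b⟩ x)) =
        LinearMap.lTensor V (ρ' (Matrix.single a b 1))
          (φ (Submodule.Quotient.mk x))) :
    q ∣ Polynomial.X * q'.comp (Polynomial.X + Polynomial.C ((k : ℂ) - (n : ℂ))) ∧
    q' ∣ Polynomial.X * q.comp (Polynomial.X - Polynomial.C ((k : ℂ) - (n : ℂ))) := by
  let π : A →ₗ[ℂ] TensorProduct ℂ V V' := φ.toLinearMap ∘ₗ A₀.mkQ
  have hπ : Function.Surjective π := φ.surjective.comp A₀.mkQ_surjective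
  have hr : Function.Injective (Module.End.rTensorAlgHom ℂ V V') :=
    (injective_iff_map_eq_zero _).2 fun f hf =>
      (Module.FaithfullyFlat.zero_iff_rTensor_zero ℂ V' f).2 hf
  have hl : Function.Injective (Module.End.lTensorAlgHom ℂ V' V) :=
    (injective_iff_map_eq_zero _).2 fun f hf =>
      (Module.FaithfullyFlat.zero_iff_lTensor_zero ℂ V f).2 hf
  have hE : ∀ i j, (Φ ((weylFamily n k).E i j), Module.End.rTensorAlgHom ℂ V V' (FV n ρ i j))
      ∈ π.intertwiners := fun i j x => by rw [weylFamily_E]; exact hφE i j x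
  have hE' : ∀ a b, (Φ ((weylFamily n k).E' a b), Module.End.lTensorAlgHom ℂ V' V (FV k ρ' a b))
      ∈ π.intertwiners := fun a b x => by rw [weylFamily_E']; exact hφE' a b x
  constructor
  · simpa [WeylFamily.shift] using
      (weylFamily n k).dvd_X_mul_comp_of_intertwines Φ π hπ _ hr _ _ _ hE hE' hq hq'.2.1
  · have h := (weylFamily n k).swap.dvd_X_mul_comp_of_intertwines Φ π hπ _ hl _ _ _ hE' hE hq'
      hq.2.1
    have hshift : ((weylFamily n k).swap.shift : ℂ) = -((k : ℂ) - n) := by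
      simp [WeylFamily.shift]
    rwa [hshift, map_neg, ← sub_eq_add_neg] at h

/-- Let `A` be a module over the Weyl algebra `W` (via `Φ`), `A₀ ⊆ A` a
subspace stable under all operators `E_{ij}` and `E'_{ab}`, `V` a nonzero `gl_n`-module with
minimal polynomial `q` and `V'` a nonzero `gl_k`-module with minimal polynomial `q'`, and
suppose `φ : A/A₀ ≅ V ⊗ V'` intertwines the action of each `E_{ij}` with `E_{ij} ⊗ 1` and
the action of each `E'_{ab}` with `1 ⊗ E'_{ab}`.  Then `q(u) ∣ u·q'(u + k − n)` and
`q'(u) ∣ u·q(u − k + n)`. -/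
theorem stmt_11 (n k : ℕ)
    (A : Type) [AddCommGroup A] [Module ℂ A]
    (Φ : Weyl n k →ₐ[ℂ] Module.End ℂ A)
    (A₀ : Submodule ℂ A)
    (hA₀E : ∀ (i j : Fin n), ∀ m ∈ A₀, Φ ⟨Eop n k i j, Eop_mem n k i j⟩ m ∈ A₀)
    (hA₀E' : ∀ (a b : Fin k), ∀ m ∈ A₀, Φ ⟨E'op n k a b, E'op_mem n k a b⟩ m ∈ A₀)
    (V : Type) [AddCommGroup V] [Module ℂ V] [Nontrivial V]
    (V' : Type) [AddCommGroup V'] [Module ℂ V'] [Nontrivial V']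
    (ρ : glN n →ₗ⁅ℂ⁆ Module.End ℂ V) (ρ' : glN k →ₗ⁅ℂ⁆ Module.End ℂ V')
    (q q' : Polynomial ℂ)
    (hq : IsMinPoly (FV n ρ) q) (hq' : IsMinPoly (FV k ρ') q')
    (φ : (A ⧸ A₀) ≃ₗ[ℂ] TensorProduct ℂ V V')
    (hφE : ∀ (i j : Fin n) (x : A),
      φ (Submodule.Quotient.mk (Φ ⟨Eop n k i j, Eop_mem n k i j⟩ x)) =
        LinearMap.rTensor V' (ρ (Matrix.single i j 1))
          (φ (Submodule.Quotient.mk x)))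
    (hφE' : ∀ (a b : Fin k) (x : A),
      φ (Submodule.Quotient.mk (Φ ⟨E'op n k a b, E'op_mem n k a b⟩ x)) =
        LinearMap.lTensor V (ρ' (Matrix.single a b 1))
          (φ (Submodule.Quotient.mk x))) :
    q ∣ Polynomial.X * q'.comp (Polynomial.X + Polynomial.C ((k : ℂ) - (n : ℂ))) ∧
    q' ∣ Polynomial.X * q.comp (Polynomial.X - Polynomial.C ((k : ℂ) - (n : ℂ))) :=
  stmt_11_general n k A Φ A₀ V V' ρ ρ' q q' hq hq' φ hφE hφE'
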